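/- Let F be a finite field, V a finite-dimensional F-vector space of dimension at least 4, q : V → F a non-degenerate quadratic form, and a ∈ F with a ≠ 0. Then diam(G_{q,a}) = 2. -/

import Mathlib

/-!
Vertices `u ≠ v` that are not adjacent have the common neighbour `u - s` as soon as
`q s = a` and `polar q (u - v) s = q (u - v)`. To find such an `s`, take a hyperbolic pair
`e, f` (Chevalley–Warning gives an isotropic vector in dimension `≥ 3`) and write
`V = ⟨e, f⟩ ⊕ W` with `W` non-degenerate of dimension `≥ 2`. Such a `W` represents `a`
(apply Chevalley–Warning to `q(w) - a t²` on `W × F`), and `s = u₀ + c e + d f` with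
`u₀ ∈ W`, `c d = a - q u₀` leaves enough freedom to adjust `polar q (u - v) s`.
Diameter exactly `2` because a nonzero isotropic vector is not adjacent to `0`.
-/

open QuadraticMap Module

/-- The representation graph `G_{q,a}`: vertices are the vectors of `V`, and distinct
`x, y` are adjacent iff `q (x - y) = a`. -/
def repGraph {F V : Type*} [Field F] [AddCommGroup V] [Module F V]
    (q : QuadraticForm F V) (a : F) : SimpleGraph V where
  Adj x y := x ≠ y ∧ q (x - y) = a
  symm := by
    constructor
    rintro x y ⟨hxy, h⟩
    refine ⟨hxy.symm, ?_⟩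
    rw [← neg_sub x y, QuadraticMap.map_neg]
    exact h
  loopless := by constructor; rintro x ⟨h, -⟩; exact h rfl

namespace QuadraticMap

variable {F V : Type*} [Field F] [AddCommGroup V] [Module F V]

theorem not_anisotropic_of_three_le_finrank [Fintype F] [FiniteDimensional F V]
    (q : QuadraticForm F V) (hdim : 3 ≤ finrank F V) : ¬ q.Anisotropic := by
  classical
  set b := finBasis F V
  set B := q.toBilin b
  let P : MvPolynomial (Fin (finrank F V)) F :=
    ∑ i, ∑ j, MvPolynomial.C (B (b i) (b j)) * MvPolynomial.X i * MvPolynomial.X j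
  have heval (x : Fin (finrank F V) → F) : MvPolynomial.eval x P = q (b.equivFun.symm x) := by
    conv_rhs => rw [← q.toQuadraticMap_toBilin b]
    simp only [P, B, map_sum, map_mul, MvPolynomial.eval_C, MvPolynomial.eval_X,
      Basis.equivFun_symm_apply, LinearMap.BilinMap.toQuadraticMap_apply, map_smul,
      LinearMap.coe_sum, Finset.sum_apply, LinearMap.smul_apply, smul_eq_mul, Finset.mul_sum]
    rw [Finset.sum_comm]
    exact Finset.sum_congr rfl fun _ _ => Finset.sum_congr rfl fun _ _ => by ring
  have hdeg : P.totalDegree < Fintype.card (Fin (finrank F V)) := by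
    have : P.IsHomogeneous 2 :=
      .sum _ _ _ fun i _ => .sum _ _ _ fun j _ =>
        (MvPolynomial.isHomogeneous_C_mul_X _ i).mul (MvPolynomial.isHomogeneous_X _ j)
    rw [Fintype.card_fin]
    exact this.totalDegree_le.trans_lt (by omega)
  obtain ⟨p, _⟩ := CharP.exists F
  obtain ⟨-, hp, -⟩ := FiniteField.card F p
  have hdvd := char_dvd_card_solutions p hdeg
  -- zero is a solution, so there are at least `p ≥ 2` of them
  have hzero : MvPolynomial.eval 0 P = 0 := by rw [heval]; simp
  have hcard : 1 < Fintype.card { x // MvPolynomial.eval x P = 0 } :=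
    hp.one_lt.trans_le (Nat.le_of_dvd (Fintype.card_pos_iff.2 ⟨⟨0, hzero⟩⟩) hdvd)
  obtain ⟨⟨x, hx⟩, hx0⟩ := Fintype.exists_ne_of_one_lt_card hcard ⟨0, hzero⟩
  rw [not_anisotropic_iff_exists]
  refine ⟨b.equivFun.symm x, ?_, by rw [← heval, hx]⟩
  exact (map_ne_zero_iff _ b.equivFun.symm.injective).2 fun h => hx0 (Subtype.ext h)

theorem map_sub_eq (q : QuadraticForm F V) (x y : V) :
    q (x - y) = q x + q y - polar q x y := by
  rw [sub_eq_add_neg, QuadraticMap.map_add q, QuadraticMap.map_neg, polar_neg_right]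
  ring

theorem polar_self_eq_zero {q : QuadraticForm F V} {e : V} (hqe : q e = 0) :
    polar q e e = 0 := by
  rw [polar_self, hqe, smul_zero]

theorem exists_polar_eq_one_of_isotropic {q : QuadraticForm F V}
    (hnd : (polarBilin q).SeparatingLeft) {e : V} (he : e ≠ 0) (hqe : q e = 0) :
    ∃ f, q f = 0 ∧ polar q e f = 1 := by
  obtain ⟨g, hg⟩ : ∃ g, polar q e g ≠ 0 := by
    by_contra! h
    exact he (hnd e h)
  obtain ⟨g₁, hg₁⟩ : ∃ g₁, polar q e g₁ = 1 :=
    ⟨(polar q e g)⁻¹ • g, by rw [polar_smul_right, smul_eq_mul, inv_mul_cancel₀ hg]⟩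
  refine ⟨g₁ - q g₁ • e, ?_, ?_⟩
  · rw [map_sub_eq, QuadraticMap.map_smul, hqe, polar_smul_right, polar_comm, hg₁]
    simp
  · rw [polar_sub_right, polar_smul_right, polar_self_eq_zero hqe, hg₁]
    simp

theorem exists_eq_of_isotropic {q : QuadraticForm F V}
    (hnd : (polarBilin q).SeparatingLeft) {e : V} (he : e ≠ 0) (hqe : q e = 0) (a : F) :
    ∃ v, q v = a := by
  obtain ⟨f, hqf, hef⟩ := exists_polar_eq_one_of_isotropic hnd he hqe
  refine ⟨a • e + f, ?_⟩
  rw [QuadraticMap.map_add q, QuadraticMap.map_smul, hqe, hqf, polar_smul_left, hef]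
  simp

theorem exists_eq_of_two_le_finrank [Fintype F] [FiniteDimensional F V]
    {q : QuadraticForm F V} (hnd : (polarBilin q).SeparatingLeft) (hdim : 2 ≤ finrank F V)
    {a : F} (ha : a ≠ 0) : ∃ v, q v = a := by
  have hdim' : 3 ≤ finrank F (V × F) := by rw [finrank_prod, finrank_self]; omega
  obtain ⟨⟨v, t⟩, hvt, hq⟩ := (not_anisotropic_iff_exists _).1
    ((q.prod ((-a) • QuadraticMap.sq)).not_anisotropic_of_three_le_finrank hdim')
  simp only [prod_apply, smul_apply, sq_apply, smul_eq_mul] at hq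
  rcases eq_or_ne t 0 with rfl | ht
  · have hv : v ≠ 0 := fun hv => hvt (by simp [hv])
    exact exists_eq_of_isotropic hnd hv (by simpa using hq) a
  · refine ⟨t⁻¹ • v, ?_⟩
    rw [QuadraticMap.map_smul, smul_eq_mul, eq_neg_of_add_eq_zero_left hq]
    field_simp

theorem exists_eq_and_polar_eq_of_polar_ne_zero {q : QuadraticForm F V} {f u w : V} {a : F}
    (hqf : q f = 0) (hfu : polar q f u = 0) (hqu : q u = a) (hwf : polar q w f ≠ 0) :
    ∃ s, q s = a ∧ polar q w s = q w := by
  refine ⟨((q w - polar q w u) / polar q w f) • f + u, ?_, ?_⟩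
  · rw [QuadraticMap.map_add q, QuadraticMap.map_smul, hqf, polar_smul_left, hfu, hqu]
    simp
  · rw [polar_add_right, polar_smul_right, smul_eq_mul, div_mul_cancel₀ _ hwf]
    ring

def orthogonalPair (q : QuadraticForm F V) (e f : V) : Submodule F V :=
  LinearMap.ker ((polarBilin q e).prod (polarBilin q f))

theorem mem_orthogonalPair {q : QuadraticForm F V} {e f v : V} :
    v ∈ q.orthogonalPair e f ↔ polar q e v = 0 ∧ polar q f v = 0 := by
  simp [orthogonalPair]

theorem finrank_le_finrank_orthogonalPair_add_two [FiniteDimensional F V]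
    (q : QuadraticForm F V) (e f : V) :
    finrank F V ≤ finrank F (q.orthogonalPair e f) + 2 := by
  have hrange := Submodule.finrank_le (LinearMap.range ((polarBilin q e).prod (polarBilin q f)))
  rw [finrank_prod, finrank_self] at hrange
  have := LinearMap.finrank_range_add_finrank_ker ((polarBilin q e).prod (polarBilin q f))
  rw [orthogonalPair]
  omega

section Hyperbolic

variable {q : QuadraticForm F V} {e f : V} (hqe : q e = 0) (hqf : q f = 0)
  (hef : polar q e f = 1)
include hqe hqf hef

theorem sub_sub_mem_orthogonalPair (z : V) :
    z - polar q f z • e - polar q e z • f ∈ q.orthogonalPair e f := by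
  have hfe : polar q f e = 1 := by rw [polar_comm, hef]
  rw [mem_orthogonalPair]
  constructor
  · rw [polar_sub_right, polar_sub_right, polar_smul_right, polar_smul_right,
      polar_self_eq_zero hqe, hef, smul_eq_mul, smul_eq_mul]
    ring
  · rw [polar_sub_right, polar_sub_right, polar_smul_right, polar_smul_right,
      polar_self_eq_zero hqf, hfe, smul_eq_mul, smul_eq_mul]
    ring

theorem separatingLeft_comp_orthogonalPair (hnd : (polarBilin q).SeparatingLeft) :
    (polarBilin (q.comp (q.orthogonalPair e f).subtype)).SeparatingLeft := by
  rintro ⟨u, hu⟩ h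
  obtain ⟨hue, huf⟩ := mem_orthogonalPair.1 hu
  refine Subtype.ext (hnd u fun z => ?_)
  calc polar q u z = polar q u (z - polar q f z • e - polar q e z • f) := by
        rw [polar_sub_right, polar_sub_right, polar_smul_right, polar_smul_right,
          polar_comm q u e, polar_comm q u f, hue, huf, smul_zero, smul_zero, sub_zero, sub_zero]
    _ = 0 := h ⟨_, sub_sub_mem_orthogonalPair hqe hqf hef z⟩

theorem exists_eq_and_polar_eq_of_mem_orthogonalPair {u w : V} (a : F)
    (hu : u ∈ q.orthogonalPair e f) (hw : w ∈ q.orthogonalPair e f) (hwu : polar q w u = q w) :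
    ∃ s, q s = a ∧ polar q w s = q w := by
  obtain ⟨hue, huf⟩ := mem_orthogonalPair.1 hu
  obtain ⟨hwe, hwf⟩ := mem_orthogonalPair.1 hw
  refine ⟨e + ((a - q u) • f + u), ?_, ?_⟩
  · rw [QuadraticMap.map_add q, QuadraticMap.map_add q, QuadraticMap.map_smul, polar_add_right,
      polar_smul_right, polar_smul_left, hqe, hqf, hef, hue, huf]
    simp
  · rw [polar_add_right, polar_add_right, polar_smul_right, polar_comm q w e,
      polar_comm q w f, hwe, hwf, hwu]
    simp

theorem exists_eq_and_polar_eq_of_hyperbolic (hnd : (polarBilin q).SeparatingLeft) {u w : V}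
    {a : F} (hu : u ∈ q.orthogonalPair e f) (hqu : q u = a) (hw : w ≠ 0) :
    ∃ s, q s = a ∧ polar q w s = q w := by
  obtain ⟨hue, huf⟩ := mem_orthogonalPair.1 hu
  rcases ne_or_eq (polar q w f) 0 with hwf | hwf
  · exact exists_eq_and_polar_eq_of_polar_ne_zero hqf huf hqu hwf
  rcases ne_or_eq (polar q w e) 0 with hwe | hwe
  · exact exists_eq_and_polar_eq_of_polar_ne_zero hqe hue hqu hwe
  have hwW : w ∈ q.orthogonalPair e f :=
    mem_orthogonalPair.2 ⟨by rw [polar_comm, hwe], by rw [polar_comm, hwf]⟩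
  obtain ⟨⟨y, hyW⟩, hy⟩ : ∃ y : q.orthogonalPair e f, polar q w y ≠ 0 := by
    by_contra! h
    exact hw (congrArg Subtype.val
      (separatingLeft_comp_orthogonalPair hqe hqf hef hnd ⟨w, hwW⟩ h))
  refine exists_eq_and_polar_eq_of_mem_orthogonalPair hqe hqf hef a
    (Submodule.smul_mem _ (q w / polar q w y) hyW) hwW ?_
  rw [polar_smul_right, smul_eq_mul, div_mul_cancel₀ _ hy]

end Hyperbolic

theorem exists_eq_and_polar_eq [Fintype F] [FiniteDimensional F V] {q : QuadraticForm F V}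
    (hnd : (polarBilin q).SeparatingLeft) (hdim : 4 ≤ finrank F V) {a : F} (ha : a ≠ 0)
    {w : V} (hw : w ≠ 0) : ∃ s, q s = a ∧ polar q w s = q w := by
  obtain ⟨e, he, hqe⟩ :=
    (not_anisotropic_iff_exists q).1 (q.not_anisotropic_of_three_le_finrank (by omega))
  obtain ⟨f, hqf, hef⟩ := exists_polar_eq_one_of_isotropic hnd he hqe
  obtain ⟨⟨u, hu⟩, hqu⟩ := exists_eq_of_two_le_finrank
    (separatingLeft_comp_orthogonalPair hqe hqf hef hnd)
    (by linarith [q.finrank_le_finrank_orthogonalPair_add_two e f]) ha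
  exact exists_eq_and_polar_eq_of_hyperbolic hqe hqf hef hnd hu hqu hw

theorem exists_eq_and_map_sub_eq [Fintype F] [FiniteDimensional F V] {q : QuadraticForm F V}
    (hnd : (polarBilin q).SeparatingLeft) (hdim : 4 ≤ finrank F V) {a : F} (ha : a ≠ 0)
    {w : V} (hw : w ≠ 0) : ∃ s, q s = a ∧ q (w - s) = a := by
  obtain ⟨s, hqs, hws⟩ := exists_eq_and_polar_eq hnd hdim ha hw
  exact ⟨s, hqs, by rw [map_sub_eq, hqs, hws]; ring⟩

end QuadraticMap

theorem SimpleGraph.ediam_eq_two_of_commonNeighbors_nonempty {α : Type*} {G : SimpleGraph α}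
    (hfar : ∃ u v, u ≠ v ∧ ¬ G.Adj u v)
    (hnear : ∀ u v, u ≠ v → ¬ G.Adj u v → (G.commonNeighbors u v).Nonempty) :
    G.ediam = 2 := by
  refine le_antisymm (ediam_le_of_edist_le fun u v => ?_) ?_
  · rcases eq_or_ne u v with rfl | huv
    · simp
    by_cases hadj : G.Adj u v
    · simp [edist_eq_one_iff_adj.2 hadj]
    · exact (edist_eq_two_iff.2 ⟨huv, hadj, hnear u v huv hadj⟩).le
  · obtain ⟨u, v, huv, hadj⟩ := hfar
    exact (edist_eq_two_iff.2 ⟨huv, hadj, hnear u v huv hadj⟩).ge.trans edist_le_ediam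

theorem repGraph_adj_iff {F V : Type*} [Field F] [AddCommGroup V] [Module F V]
    {q : QuadraticForm F V} {a : F} (ha : a ≠ 0) {x y : V} :
    (repGraph q a).Adj x y ↔ q (x - y) = a :=
  ⟨And.right, fun h => ⟨fun hxy => ha (by rw [← h, hxy, sub_self, map_zero]), h⟩⟩

/-- Over a finite field, a non-degenerate quadratic form of dimension at least `4` and
`a ≠ 0` yield `diam G_{q,a} = 2`. -/
theorem stmt_15 {F V : Type*} [Field F] [Fintype F]
    [AddCommGroup V] [Module F V] [FiniteDimensional F V]
    (q : QuadraticForm F V) (hdim : 4 ≤ Module.finrank F V)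
    (hnd : ∀ x : V, (∀ y : V, polar (⇑q) x y = 0) → x = 0)
    (a : F) (ha : a ≠ 0) :
    (repGraph q a).ediam = 2 := by
  obtain ⟨e, he, hqe⟩ :=
    (not_anisotropic_iff_exists q).1 (q.not_anisotropic_of_three_le_finrank (by omega))
  refine SimpleGraph.ediam_eq_two_of_commonNeighbors_nonempty ⟨e, 0, he, ?_⟩
    fun u v huv _ => ?_
  · rw [repGraph_adj_iff ha, sub_zero, hqe]
    exact ha.symm
  · obtain ⟨s, hqs, hqws⟩ := exists_eq_and_map_sub_eq hnd hdim ha (sub_ne_zero.2 huv)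
    refine ⟨u - s, (repGraph_adj_iff ha).2 ?_, (repGraph_adj_iff ha).2 ?_⟩
    · rwa [sub_sub_cancel]
    · rwa [QuadraticMap.map_sub, sub_right_comm]
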